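/- arXiv:2210.00176 — 4 statements merged into one kernel-verified Lean document; each statement's English description precedes it below -/
import Mathlib

section
/- If the dataset x_1,...,x_N ∈ ℝ^{d+1} is in general position (every subset of size ≤ d+1 linearly independent), then for sufficiently small ε > 0, any perturbed dataset x'_1,...,x'_N with ‖x_i - x'_i‖_2 ≤ ε has exactly the same set of zonotope vertex barcodes: b ∈ {0,1}^N gives a vertex Σ_{i: b_i=1} x_i of the zonotope generated by the x_i if and only if Σ_{i: b_i=1} x'_i is a vertex of the zonotope generated by the x'_i. -/
/-- The zonotope generated by the vectors `g i`. -/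
def Zono {E : Type*} [AddCommGroup E] [Module ℝ E] {N : ℕ} (g : Fin N → E) : Set E :=
  {p | ∃ lam : Fin N → ℝ, (∀ i, lam i ∈ Set.Icc (0 : ℝ) 1) ∧ p = ∑ i, lam i • g i}

/-- `p` is a vertex (exposed point) of `Z`. -/
def IsVertex {n : ℕ} (Z : Set (Fin n → ℝ)) (p : Fin n → ℝ) : Prop :=
  p ∈ Z ∧ ∃ φ : Fin n → ℝ, ∀ q ∈ Z, q ≠ p → ∑ j, φ j * q j < ∑ j, φ j * p j

namespace Stmt10aux

variable {d N : ℕ}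

/-- The sign vector attached to a barcode. -/
def sg (S : Finset (Fin N)) (i : Fin N) : ℝ := if i ∈ S then 1 else -1

/-- Feasibility of the strict sign system attached to `S`. -/
def Feas (x : Fin N → Fin (d + 1) → ℝ) (S : Finset (Fin N)) : Prop :=
  ∃ φ : Fin (d + 1) → ℝ, ∀ i, 0 < sg S i * ∑ j, φ j * x i j

lemma dot_sum (φ : Fin (d + 1) → ℝ) (lam : Fin N → ℝ) (x : Fin N → Fin (d + 1) → ℝ) :
    ∑ j, φ j * (∑ i, lam i • x i) j = ∑ i, lam i * ∑ j, φ j * x i j := by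
  simp only [Finset.sum_apply, Pi.smul_apply, smul_eq_mul, Finset.mul_sum]
  rw [Finset.sum_comm]
  exact Finset.sum_congr rfl fun i _ => Finset.sum_congr rfl fun j _ => by ring

lemma sum_indicator (S : Finset (Fin N)) (x : Fin N → Fin (d + 1) → ℝ) :
    ∑ i, (if i ∈ S then (1 : ℝ) else 0) • x i = ∑ i ∈ S, x i := by
  have : ∀ i : Fin N, (if i ∈ S then (1 : ℝ) else 0) • x i = if i ∈ S then x i else 0 := by
    intro i; split <;> simp
  simp_rw [this]
  rw [← Finset.sum_filter]
  exact Finset.sum_congr (by simp [Finset.filter_mem_eq_inter]) (fun _ _ => rfl)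

lemma vertex_of_feas {x : Fin N → Fin (d + 1) → ℝ} {S : Finset (Fin N)}
    (h : Feas x S) : IsVertex (Zono x) (∑ i ∈ S, x i) := by
  obtain ⟨φ, hφ⟩ := h
  set c : Fin N → ℝ := fun i => ∑ j, φ j * x i j with hc
  set ind : Fin N → ℝ := fun i => if i ∈ S then (1 : ℝ) else 0 with hind
  have hp : (∑ i ∈ S, x i) = ∑ i, ind i • x i := (sum_indicator S x).symm
  constructor
  · exact ⟨ind, fun i => by by_cases h : i ∈ S <;> simp [hind, h], hp⟩
  · refine ⟨φ, fun q hq hne => ?_⟩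
    obtain ⟨lam, hlam, rfl⟩ := hq
    rw [hp, dot_sum, dot_sum]
    have hterm : ∀ i ∈ Finset.univ, lam i * c i ≤ ind i * c i := by
      intro i _
      by_cases h : i ∈ S
      · have hci : 0 < c i := by have := hφ i; simpa [sg, h] using this
        have : lam i ≤ 1 := (hlam i).2
        simp only [hind, if_pos h]
        nlinarith
      · have hci : c i < 0 := by have := hφ i; rw [hc]; simp only [sg, if_neg h] at this; linarith
        have : 0 ≤ lam i := (hlam i).1
        simp only [hind, if_neg h]
        nlinarith
    have hex : ∃ i ∈ Finset.univ, lam i * c i < ind i * c i := by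
      by_contra hno
      push_neg at hno
      have heq : ∀ i, lam i = ind i := by
        intro i
        have h1 := hterm i (Finset.mem_univ i)
        have h2 := hno i (Finset.mem_univ i)
        have h3 : lam i * c i = ind i * c i := le_antisymm h1 h2
        have hci : c i ≠ 0 := by
          by_cases h : i ∈ S
          · have := hφ i; simp only [sg, if_pos h] at this; linarith
          · have := hφ i; simp only [sg, if_neg h] at this; nlinarith
        exact mul_right_cancel₀ hci h3
      exact hne (by rw [hp]; exact Finset.sum_congr rfl fun i _ => by rw [heq i])
    exact Finset.sum_lt_sum hterm hex

lemma sum_flip (x : Fin N → Fin (d + 1) → ℝ) (lam : Fin N → ℝ) (i : Fin N) (a : ℝ) :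
    ∑ i', Function.update lam i a i' • x i'
      = (∑ i', lam i' • x i') - lam i • x i + a • x i := by
  have h1 := Finset.add_sum_erase Finset.univ (fun i' => Function.update lam i a i' • x i')
    (Finset.mem_univ i)
  have h2 := Finset.add_sum_erase Finset.univ (fun i' => lam i' • x i') (Finset.mem_univ i)
  have h3 : ∑ i' ∈ Finset.univ.erase i, Function.update lam i a i' • x i'
      = ∑ i' ∈ Finset.univ.erase i, lam i' • x i' := by
    refine Finset.sum_congr rfl fun i' hi' => ?_
    rw [Function.update_of_ne (Finset.ne_of_mem_erase hi')]
  rw [← h1, ← h2, h3]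
  simp only [Function.update_self]
  abel

lemma feas_of_vertex {x : Fin N → Fin (d + 1) → ℝ} {S : Finset (Fin N)}
    (hx : ∀ i, x i ≠ 0) (hv : IsVertex (Zono x) (∑ i ∈ S, x i)) : Feas x S := by
  obtain ⟨hp, φ, hφ⟩ := hv
  refine ⟨φ, fun i => ?_⟩
  set ind : Fin N → ℝ := fun i' => if i' ∈ S then (1 : ℝ) else 0 with hind
  have hpe : (∑ i ∈ S, x i) = ∑ i', ind i' • x i' := (sum_indicator S x).symm
  have hdot : ∀ y : Fin (d + 1) → ℝ, ∀ i : Fin N,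
      (∑ j, φ j * (y + x i) j = (∑ j, φ j * y j) + ∑ j, φ j * x i j)
      ∧ (∑ j, φ j * (y - x i) j = (∑ j, φ j * y j) - ∑ j, φ j * x i j) := by
    intro y i
    constructor
    · rw [← Finset.sum_add_distrib]; exact Finset.sum_congr rfl fun j _ => by simp; ring
    · rw [← Finset.sum_sub_distrib]; exact Finset.sum_congr rfl fun j _ => by simp; ring
  by_cases hi : i ∈ S
  · have hq : ((∑ i ∈ S, x i) - x i) ∈ Zono x := by
      refine ⟨Function.update ind i 0, fun i' => ?_, ?_⟩
      · rcases eq_or_ne i' i with rfl | hne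
        · simp
        · rw [Function.update_of_ne hne]
          by_cases h : i' ∈ S <;> simp [hind, h]
      · rw [sum_flip x ind i 0, ← hpe]
        simp [hind, hi]
    have hne : (∑ i ∈ S, x i) - x i ≠ ∑ i ∈ S, x i := by
      intro h
      exact hx i (sub_eq_self.mp h)
    have := hφ _ hq hne
    rw [(hdot (∑ i ∈ S, x i) i).2] at this
    simp only [sg, if_pos hi, one_mul]
    linarith
  · have hq : ((∑ i ∈ S, x i) + x i) ∈ Zono x := by
      refine ⟨Function.update ind i 1, fun i' => ?_, ?_⟩
      · rcases eq_or_ne i' i with rfl | hne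
        · simp
        · rw [Function.update_of_ne hne]
          by_cases h : i' ∈ S <;> simp [hind, h]
      · rw [sum_flip x ind i 1, ← hpe]
        simp [hind, hi]
    have hne : (∑ i ∈ S, x i) + x i ≠ ∑ i ∈ S, x i := by
      intro h
      exact hx i (add_eq_left.mp h)
    have := hφ _ hq hne
    rw [(hdot (∑ i ∈ S, x i) i).1] at this
    simp only [sg, if_neg hi, neg_one_mul]
    linarith

lemma single_smul_eq {n : ℕ} (j : Fin n) (a : ℝ) :
    Pi.single j a = a • (Pi.single j 1 : Fin n → ℝ) := by
  funext k
  rcases eq_or_ne k j with rfl | h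
  · simp
  · simp [Pi.single_apply, h.symm, if_neg]

lemma eq_sum_single {n : ℕ} (y : Fin n → ℝ) :
    y = ∑ j, y j • (Pi.single j 1 : Fin n → ℝ) := by
  conv_lhs => rw [← Finset.univ_sum_single y]
  exact Finset.sum_congr rfl fun j _ => single_smul_eq j (y j)

lemma exists_functional {ι : Type*} [Fintype ι] [DecidableEq ι] {n : ℕ} {v : ι → Fin n → ℝ}
    (hv : LinearIndependent ℝ v) (c : ι → ℝ) :
    ∃ ψ : Fin n → ℝ, ∀ i, ∑ j, ψ j * v i j = c i := by
  classical
  let T : (ι → ℝ) →ₗ[ℝ] (Fin n → ℝ) := ∑ i : ι, LinearMap.smulRight (LinearMap.proj i) (v i)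
  have hT : ∀ a : ι → ℝ, T a = ∑ i, a i • v i := by
    intro a; simp [T, LinearMap.sum_apply]
  have hTi : ∀ i, T (Pi.single i 1) = v i := by
    intro i
    rw [hT]
    rw [Finset.sum_eq_single i (fun k _ hk => by simp [Pi.single_apply, hk]) (by simp)]
    simp
  have hinj : LinearMap.ker T = ⊥ := by
    rw [LinearMap.ker_eq_bot']
    intro a ha
    rw [hT] at ha
    funext i
    exact Fintype.linearIndependent_iff.mp hv a ha i
  obtain ⟨g, hg⟩ := T.exists_leftInverse_of_injective hinj
  let f : (Fin n → ℝ) →ₗ[ℝ] ℝ := (∑ i : ι, c i • LinearMap.proj i) ∘ₗ g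
  have hfv : ∀ i, f (v i) = c i := by
    intro i
    have h1 : g (v i) = Pi.single i 1 := by
      rw [← hTi i, ← LinearMap.comp_apply, hg]; simp
    simp only [f, LinearMap.comp_apply, h1, LinearMap.sum_apply, LinearMap.smul_apply,
      LinearMap.proj_apply, smul_eq_mul]
    rw [Finset.sum_eq_single i (fun k _ hk => by simp [Pi.single_apply, hk.symm]) (by simp)]
    simp
  refine ⟨fun j => f (Pi.single j 1), fun i => ?_⟩
  calc ∑ j, f (Pi.single j 1) * v i j
      = f (∑ j, v i j • (Pi.single j 1 : Fin n → ℝ)) := by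
        rw [map_sum]
        exact Finset.sum_congr rfl fun j _ => by rw [map_smul]; simp [mul_comm]
    _ = f (v i) := by rw [← eq_sum_single]
    _ = c i := hfv i

lemma gap {x : Fin N → Fin (d + 1) → ℝ} {S : Finset (Fin N)}
    (hgp : ∀ s : Finset (Fin N), s.card ≤ d + 1 →
      LinearIndependent ℝ (fun i : s => x i))
    (hN : Nonempty (Fin N)) (hnf : ¬ Feas x S) :
    ∃ M < (0:ℝ), ∀ φ : Fin (d + 1) → ℝ, (∑ j, φ j ^ 2 = 1) →
      ∃ i, sg S i * ∑ j, φ j * x i j ≤ M := by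
  classical
  have hN' : (Finset.univ : Finset (Fin N)).Nonempty := Finset.univ_nonempty
  set Sp : Set (Fin (d + 1) → ℝ) := {φ | ∑ j, φ j ^ 2 = 1} with hSp
  have hSpne : Sp.Nonempty := by
    refine ⟨(Pi.single 0 1 : Fin (d+1) → ℝ), ?_⟩
    show ∑ j, (Pi.single 0 1 : Fin (d+1) → ℝ) j ^ 2 = 1
    rw [Finset.sum_eq_single 0 (fun k _ hk => by simp [Pi.single_apply, hk]) (by simp)]
    simp
  have hclosed : IsClosed Sp :=
    isClosed_eq (by continuity) continuous_const
  have hbdd : Bornology.IsBounded Sp := by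
    rw [Metric.isBounded_iff_subset_closedBall 0]
    refine ⟨1, fun φ hφ => ?_⟩
    simp only [Metric.mem_closedBall, dist_zero_right]
    rw [pi_norm_le_iff_of_nonneg zero_le_one]
    intro j
    have h1 : φ j ^ 2 ≤ 1 := by
      have := Finset.single_le_sum (f := fun j => φ j ^ 2) (fun k _ => sq_nonneg _)
        (Finset.mem_univ j)
      rw [hφ] at this; exact this
    rw [Real.norm_eq_abs, abs_le]
    constructor <;> nlinarith
  have hcomp : IsCompact Sp := Metric.isCompact_of_isClosed_isBounded hclosed hbdd
  set g : (Fin (d + 1) → ℝ) → ℝ :=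
    fun φ => Finset.univ.inf' hN' (fun i => sg S i * ∑ j, φ j * x i j) with hg
  have hgc : Continuous g := by
    apply Continuous.finset_inf'_apply
    intro i _
    exact continuous_const.mul (continuous_finset_sum _ fun j _ =>
      (continuous_apply j).mul continuous_const)
  obtain ⟨φ₀, hφ₀Sp, hmax'⟩ := hcomp.exists_isMaxOn hSpne hgc.continuousOn
  have hmax : ∀ φ ∈ Sp, g φ ≤ g φ₀ := fun φ hφ => hmax' hφ
  set M := g φ₀ with hM
  have key : ∀ φ ∈ Sp, ∃ i, sg S i * ∑ j, φ j * x i j ≤ M := by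
    intro φ hφ
    obtain ⟨i, _, hieq⟩ := Finset.exists_mem_eq_inf' hN' (fun i => sg S i * ∑ j, φ j * x i j)
    exact ⟨i, by rw [← hieq]; exact hmax φ hφ⟩
  have hMle : M ≤ 0 := by
    by_contra h
    push_neg at h
    exact hnf ⟨φ₀, fun i => lt_of_lt_of_le h
      (Finset.inf'_le _ (Finset.mem_univ i))⟩
  have hMne : M ≠ 0 := by
    intro hM0
    set c : Fin N → ℝ := fun i => ∑ j, φ₀ j * x i j with hcdef
    have ha : ∀ i, 0 ≤ sg S i * c i := by
      intro i
      have h1 : M ≤ sg S i * c i := Finset.inf'_le _ (Finset.mem_univ i)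
      rw [hM0] at h1
      exact h1
    set Zf : Finset (Fin N) := Finset.univ.filter (fun i => c i = 0) with hZf
    have hcard : Zf.card ≤ d := by
      by_contra hcard
      push_neg at hcard
      obtain ⟨Z', hZ'sub, hZ'card⟩ := Finset.exists_subset_card_eq hcard
      have hli := hgp Z' (le_of_eq hZ'card)
      haveI : Nonempty {y // y ∈ Z'} :=
        (Finset.card_pos.mp (by rw [hZ'card]; exact Nat.succ_pos d)).to_subtype
      have hspan : Submodule.span ℝ (Set.range (fun i : Z' => x i)) = ⊤ :=
        hli.span_eq_top_of_card_eq_finrank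
          (by rw [Fintype.card_coe, hZ'card]; simp [Module.finrank_pi])
      set L : (Fin (d + 1) → ℝ) →ₗ[ℝ] ℝ := ∑ j, φ₀ j • LinearMap.proj j with hL
      have hLy : ∀ y : Fin (d + 1) → ℝ, L y = ∑ j, φ₀ j * y j := by
        intro y; simp [hL]
      have hLx : ∀ i : Z', L (x i) = 0 := by
        intro i
        rw [hLy]
        have : (i : Fin N) ∈ Zf := hZ'sub i.2
        simpa [hZf] using (Finset.mem_filter.mp this).2
      have hL0 : L φ₀ = 0 := by
        have hmem : φ₀ ∈ Submodule.span ℝ (Set.range (fun i : Z' => x i)) := by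
          rw [hspan]; trivial
        refine Submodule.span_induction ?_ (by simp) (fun a b _ _ ha hb => by
          rw [map_add, ha, hb, add_zero]) (fun r a _ ha => by
          rw [map_smul, ha, smul_zero]) hmem
        rintro y ⟨i, rfl⟩
        exact hLx i
      rw [hLy] at hL0
      have hsq : ∑ j, φ₀ j ^ 2 = 1 := hφ₀Sp
      rw [show (∑ j, φ₀ j * φ₀ j) = ∑ j, φ₀ j ^ 2 from
        Finset.sum_congr rfl fun j _ => (sq (φ₀ j)).symm, hsq] at hL0
      norm_num at hL0
    have hliZ : LinearIndependent ℝ (fun i : Zf => x i) :=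
      hgp Zf (le_trans hcard (Nat.le_succ d))
    obtain ⟨ψ, hψ⟩ := exists_functional hliZ (fun i : Zf => sg S i.val)
    set w : Fin N → ℝ := fun i => ∑ j, ψ j * x i j with hwdef
    set t : ℝ := Finset.univ.inf' hN'
      (fun i => if c i = 0 then 1 else (sg S i * c i) / (|w i| + 1)) with ht
    have hapos : ∀ i, c i ≠ 0 → 0 < sg S i * c i := by
      intro i hi
      rcases lt_or_eq_of_le (ha i) with h | h
      · exact h
      · exfalso
        apply hi
        have hsg : sg S i ≠ 0 := by unfold sg; split <;> norm_num
        rcases mul_eq_zero.mp h.symm with h' | h'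
        · exact absurd h' hsg
        · exact h'
    have htpos : 0 < t := by
      rw [ht, Finset.lt_inf'_iff]
      intro i _
      by_cases h : c i = 0
      · simp [h]
      · rw [if_neg h]
        have := hapos i h
        positivity
    apply hnf
    refine ⟨φ₀ + t • ψ, fun i => ?_⟩
    have hsum : ∑ j, (φ₀ + t • ψ) j * x i j = c i + t * w i := by
      rw [hcdef, hwdef]
      simp only [Pi.add_apply, Pi.smul_apply, smul_eq_mul, Finset.mul_sum]
      rw [← Finset.sum_add_distrib]
      exact Finset.sum_congr rfl fun j _ => by ring
    rw [hsum, mul_add]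
    by_cases h : c i = 0
    · have hiZ : i ∈ Zf := by simp [hZf, h]
      have hw : w i = sg S i := hψ ⟨i, hiZ⟩
      rw [h, mul_zero, zero_add, hw]
      have : sg S i * (t * sg S i) = t := by
        have hs : sg S i * sg S i = 1 := by unfold sg; split <;> norm_num
        calc sg S i * (t * sg S i) = t * (sg S i * sg S i) := by ring
          _ = t := by rw [hs]; ring
      rw [this]
      exact htpos
    · have h1 := hapos i h
      have h2 : t ≤ (sg S i * c i) / (|w i| + 1) := by
        have := Finset.inf'_le (fun i => if c i = 0 then 1 else (sg S i * c i) / (|w i| + 1))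
          (Finset.mem_univ i)
        rw [← ht] at this
        rwa [if_neg h] at this
      have h3 : |sg S i * (t * w i)| ≤ t * |w i| := by
        rw [abs_mul, abs_mul]
        have : |sg S i| = 1 := by unfold sg; split <;> norm_num
        rw [this, one_mul, abs_of_pos htpos]
      have h4 : t * (|w i| + 1) ≤ sg S i * c i :=
        (le_div_iff₀ (by positivity)).mp h2
      have h5 := neg_abs_le (sg S i * (t * w i))
      linarith
  refine ⟨M, lt_of_le_of_ne hMle hMne, fun φ hφ => key φ hφ⟩

lemma abs_CS {n : ℕ} (f g : Fin n → ℝ) :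
    |∑ j, f j * g j| ≤ Real.sqrt (∑ j, f j ^ 2) * Real.sqrt (∑ j, g j ^ 2) := by
  rw [abs_le]
  constructor
  · have h := Real.sum_mul_le_sqrt_mul_sqrt Finset.univ f (fun j => -g j)
    simp only [neg_sq, mul_neg, Finset.sum_neg_distrib] at h
    linarith
  · exact Real.sum_mul_le_sqrt_mul_sqrt Finset.univ f g

end Stmt10aux

open Stmt10aux

/-- If `x_1, ..., x_N ∈ ℝ^{d+1}` are in general position (every subset of size at most `d+1`
linearly independent), then for some sufficiently small `ε > 0`, every perturbed dataset with
`‖x_i - x'_i‖₂ ≤ ε` has exactly the same set of zonotope vertex barcodes: a subset `S` gives a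
vertex `∑_{i ∈ S} x_i` of the zonotope of the `x_i` iff `∑_{i ∈ S} x'_i` is a vertex of the
zonotope of the `x'_i`. -/
theorem stmt10 {d N : ℕ} (x : Fin N → Fin (d + 1) → ℝ)
    (hgp : ∀ s : Finset (Fin N), s.card ≤ d + 1 →
      LinearIndependent ℝ (fun i : s => x i)) :
    ∃ ε > (0 : ℝ), ∀ x' : Fin N → Fin (d + 1) → ℝ,
      (∀ i, Real.sqrt (∑ j, (x i j - x' i j) ^ 2) ≤ ε) →
      ∀ S : Finset (Fin N),
        (IsVertex (Zono x) (∑ i ∈ S, x i) ↔ IsVertex (Zono x') (∑ i ∈ S, x' i)) := by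
  classical
  rcases Nat.eq_zero_or_pos N with hN0 | hNpos
  · subst hN0
    refine ⟨1, one_pos, fun x' _ S => ?_⟩
    have hZ : ∀ y : Fin 0 → Fin (d + 1) → ℝ, IsVertex (Zono y) (∑ i ∈ S, y i) := by
      intro y
      have hS : S = ∅ := Finset.eq_empty_of_forall_notMem (fun i => i.elim0)
      constructor
      · exact ⟨fun i => 0, fun i => i.elim0, by simp [hS]⟩
      · refine ⟨0, fun q hq hne => absurd ?_ hne⟩
        obtain ⟨lam, _, rfl⟩ := hq
        simp [hS]
    exact iff_of_true (hZ x) (hZ x')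
  · haveI : Nonempty (Fin N) := ⟨⟨0, hNpos⟩⟩
    have hN' : (Finset.univ : Finset (Fin N)).Nonempty := Finset.univ_nonempty
    have hx0 : ∀ i, x i ≠ 0 := by
      intro i hzero
      have hli := hgp {i} (by simp)
      exact hli.ne_zero ⟨i, by simp⟩ hzero
    have main : ∀ S : Finset (Fin N), ∃ εS > (0:ℝ), ∀ x' : Fin N → Fin (d + 1) → ℝ,
        (∀ i, Real.sqrt (∑ j, (x i j - x' i j) ^ 2) ≤ εS) →
        (IsVertex (Zono x) (∑ i ∈ S, x i) ↔ IsVertex (Zono x') (∑ i ∈ S, x' i)) := by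
      intro S
      by_cases hf : Feas x S
      · obtain ⟨φ, hφ⟩ := hf
        set δ : ℝ := Finset.univ.inf' hN' (fun i => sg S i * ∑ j, φ j * x i j) with hδdef
        have hδ : 0 < δ := (Finset.lt_inf'_iff hN').mpr fun i _ => hφ i
        set nφ : ℝ := Real.sqrt (∑ j, φ j ^ 2) with hnφ
        have hnφ0 : 0 ≤ nφ := Real.sqrt_nonneg _
        refine ⟨δ / (nφ + 1), by positivity, fun x' hx' => ?_⟩
        have hf' : Feas x' S := by
          refine ⟨φ, fun i => ?_⟩
          have hsplit : ∑ j, φ j * x' i j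
              = (∑ j, φ j * x i j) - ∑ j, φ j * (x i j - x' i j) := by
            rw [← Finset.sum_sub_distrib]
            exact Finset.sum_congr rfl fun j _ => by ring
          have hCS := abs_CS φ (fun j => x i j - x' i j)
          have hle := hx' i
          have hsge : |sg S i| = 1 := by unfold sg; split <;> norm_num
          have hd : |sg S i * ∑ j, φ j * (x i j - x' i j)|
              ≤ nφ * (δ / (nφ + 1)) := by
            rw [abs_mul, hsge, one_mul]
            calc |∑ j, φ j * (x i j - x' i j)|
                ≤ nφ * Real.sqrt (∑ j, (x i j - x' i j) ^ 2) := hCS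
              _ ≤ nφ * (δ / (nφ + 1)) := by
                  apply mul_le_mul_of_nonneg_left hle hnφ0
          have hδi : δ ≤ sg S i * ∑ j, φ j * x i j :=
            Finset.inf'_le _ (Finset.mem_univ i)
          have hkey : nφ * (δ / (nφ + 1)) < δ := by
            rw [mul_div_assoc', div_lt_iff₀ (by positivity)]
            nlinarith
          have h6 := le_abs_self (sg S i * ∑ j, φ j * (x i j - x' i j))
          have : sg S i * ∑ j, φ j * x' i j
              = sg S i * ∑ j, φ j * x i j - sg S i * ∑ j, φ j * (x i j - x' i j) := by
            rw [hsplit]; ring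
          rw [this]
          linarith
        exact iff_of_true (vertex_of_feas ⟨φ, hφ⟩) (vertex_of_feas hf')
      · obtain ⟨M, hM, hMk⟩ := gap hgp ‹Nonempty (Fin N)› hf
        set r : ℝ := Finset.univ.inf' hN' (fun i => Real.sqrt (∑ j, x i j ^ 2)) with hr
        have hrpos : 0 < r := by
          rw [hr, Finset.lt_inf'_iff]
          intro i _
          apply Real.sqrt_pos.mpr
          obtain ⟨j, hj⟩ := Function.ne_iff.mp (hx0 i)
          exact Finset.sum_pos' (fun k _ => sq_nonneg _)
            ⟨j, Finset.mem_univ j, sq_pos_iff.mpr hj⟩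
        refine ⟨min (-M / 2) (r / 2), lt_min (by linarith) (by linarith), fun x' hx' => ?_⟩
        have hx'0 : ∀ i, x' i ≠ 0 := by
          intro i hzero
          have h1 := hx' i
          rw [hzero] at h1
          simp only [Pi.zero_apply, sub_zero] at h1
          have h2 : r ≤ Real.sqrt (∑ j, x i j ^ 2) :=
            Finset.inf'_le _ (Finset.mem_univ i)
          have h3 : min (-M / 2) (r / 2) ≤ r / 2 := min_le_right _ _
          linarith
        have hnf' : ¬ Feas x' S := by
          rintro ⟨φ', hφ'⟩
          have hφ'ne : φ' ≠ 0 := by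
            intro h0
            have := hφ' (Classical.arbitrary (Fin N))
            rw [h0] at this
            simp at this
          set nφ : ℝ := Real.sqrt (∑ j, φ' j ^ 2) with hnφ
          have hs2 : 0 < ∑ j, φ' j ^ 2 := by
            obtain ⟨j, hj⟩ := Function.ne_iff.mp hφ'ne
            exact Finset.sum_pos' (fun k _ => sq_nonneg _)
              ⟨j, Finset.mem_univ j, sq_pos_iff.mpr hj⟩
          have hnφpos : 0 < nφ := Real.sqrt_pos.mpr hs2
          set u : Fin (d + 1) → ℝ := fun j => φ' j / nφ with hu
          have huS : ∑ j, u j ^ 2 = 1 := by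
            simp only [hu, div_pow]
            rw [← Finset.sum_div]
            rw [Real.sq_sqrt hs2.le]
            exact div_self hs2.ne'
          obtain ⟨i, hi⟩ := hMk u huS
          have hpos : 0 < sg S i * ∑ j, u j * x' i j := by
            have : ∑ j, u j * x' i j = (∑ j, φ' j * x' i j) / nφ := by
              rw [Finset.sum_div]
              exact Finset.sum_congr rfl fun j _ => by rw [hu]; ring
            rw [this, show sg S i * ((∑ j, φ' j * x' i j) / nφ)
              = (sg S i * ∑ j, φ' j * x' i j) / nφ from by ring]
            exact div_pos (hφ' i) hnφpos
          have hCS := abs_CS u (fun j => x i j - x' i j)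
          rw [huS, Real.sqrt_one, one_mul] at hCS
          have hle : Real.sqrt (∑ j, (x i j - x' i j) ^ 2) ≤ -M / 2 :=
            le_trans (hx' i) (min_le_left _ _)
          have hsplit : sg S i * ∑ j, u j * x i j
              = sg S i * ∑ j, u j * x' i j + sg S i * ∑ j, u j * (x i j - x' i j) := by
            rw [show ∑ j, u j * x i j
              = (∑ j, u j * x' i j) + ∑ j, u j * (x i j - x' i j) by
                rw [← Finset.sum_add_distrib]
                exact Finset.sum_congr rfl fun j _ => by ring]
            ring
          have hsge : |sg S i| = 1 := by unfold sg; split <;> norm_num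
          have hd : |sg S i * ∑ j, u j * (x i j - x' i j)| ≤ -M / 2 := by
            rw [abs_mul, hsge, one_mul]
            exact le_trans hCS hle
          have h5 := neg_abs_le (sg S i * ∑ j, u j * (x i j - x' i j))
          rw [hsplit] at hi
          linarith
        exact iff_of_false
          (fun hv => hf (feas_of_vertex hx0 hv))
          (fun hv => hnf' (feas_of_vertex hx'0 hv))
    choose εS hεSpos hεS using main
    refine ⟨Finset.univ.inf' Finset.univ_nonempty εS,
      (Finset.lt_inf'_iff Finset.univ_nonempty).mpr fun S _ => hεSpos S, fun x' hx' S => ?_⟩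
    exact hεS S x' fun i => le_trans (hx' i) (Finset.inf'_le _ (Finset.mem_univ S))
end

section
/- Let A, B ⊆ ℝ^d be finite sets with |B| = d+1, such that the d-th coordinate of every point of A is strictly less than the d-th coordinate of every point of B, and A ∪ B is in general (affine) position. For any labels y_b ∈ ℝ for b ∈ B, there exist w_1, w_2 ∈ ℝ^{d+1} such that w_1ᵀā ≤ 0, w_2ᵀā ≤ 0 for all a ∈ A and w_1ᵀb̄ ≥ 0, w_2ᵀb̄ ≥ 0 for all b ∈ B, and the function f(x) = max(w_1ᵀx̄, 0) − max(w_2ᵀx̄, 0) satisfies f(a) = 0 for all a ∈ A and f(b) = y_b for all b ∈ B. -/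
/-!
Interpolate the labels on `B` by an affine function `w` (possible since `B` is affinely
independent), and let `v` be the affine function `x ↦ x_d - c` for a level `c` separating `A` from
`B`. For `t ≥ 0` large enough, `w + t v` is nonpositive on `A` and nonnegative on `B`, and so is
`t v`; hence both ReLUs vanish on `A`, while on `B` they are linear and their difference is `w`.
-/

open Finset Matrix

/-- Homogeneous coordinates: append a final coordinate equal to `1`. -/
def bar {d : ℕ} (x : Fin d → ℝ) : Fin (d + 1) → ℝ := Fin.snoc x 1

lemma snoc_dotProduct_bar {d : ℕ} (u x : Fin d → ℝ) (r : ℝ) :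
    (Fin.snoc u r : Fin (d + 1) → ℝ) ⬝ᵥ bar x = u ⬝ᵥ x + r := by
  simp [dotProduct, Fin.sum_univ_castSucc, bar]

lemma AffineIndependent.linearIndependent_bar {d : ℕ} {ι : Type*} [Fintype ι]
    {p : ι → Fin d → ℝ} (hp : AffineIndependent ℝ p) :
    LinearIndependent ℝ (fun i => bar (p i)) := by
  rw [Fintype.linearIndependent_iff]
  intro g hg
  have hcoord : ∀ j, ∑ i, g i * bar (p i) j = 0 := fun j => by
    simpa [Finset.sum_apply] using congrFun hg j
  have hsum : ∑ i, g i = 0 := by simpa [bar] using hcoord (Fin.last d)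
  have hvec : ∑ i, g i • p i = 0 := funext fun k => by simpa [bar] using hcoord k.castSucc
  exact fun i => affineIndependent_iff.mp hp univ g hsum hvec i (mem_univ i)

lemma LinearIndependent.exists_dotProduct_eq {K n ι : Type*} [Field K] [Fintype n]
    [DecidableEq n] {v : ι → n → K} (hv : LinearIndependent K v) (y : ι → K) :
    ∃ w : n → K, ∀ i, w ⬝ᵥ v i = y i := by
  let b := Module.Basis.sumExtend hv
  have hb : ∀ i, b (Sum.inl i) = v i := fun i => by simp [b, Module.Basis.sumExtend]; rfl
  refine ⟨(dotProductEquiv K n).symm (b.constr K (Sum.elim y 0)), fun i => ?_⟩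
  rw [← dotProductEquiv_apply_apply, LinearEquiv.apply_symm_apply, ← hb, Module.Basis.constr_basis,
    Sum.elim_inl]

lemma Finset.exists_forall_le_mul {α : Type*} (s : Finset α) (f g : α → ℝ)
    (hg : ∀ x ∈ s, 0 < g x) : ∃ t : ℝ, ∀ x ∈ s, f x ≤ t * g x := by
  obtain ⟨t, ht⟩ := (s.image fun x => f x / g x).bddAbove
  refine ⟨t, fun x hx => ?_⟩
  have := ht (mem_image_of_mem _ hx)
  rwa [div_le_iff₀ (hg x hx)] at this

lemma exists_nonneg_add_mul_nonpos_nonneg {α : Type*} (A B : Finset α) (f g : α → ℝ)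
    (hA : ∀ a ∈ A, g a < 0) (hB : ∀ b ∈ B, 0 < g b) :
    ∃ t : ℝ, (∀ a ∈ A, f a + t * g a ≤ 0 ∧ t * g a ≤ 0) ∧
      ∀ b ∈ B, 0 ≤ f b + t * g b ∧ 0 ≤ t * g b := by
  obtain ⟨t₁, ht₁⟩ := A.exists_forall_le_mul f (fun a => -g a) fun a ha => neg_pos.2 (hA a ha)
  obtain ⟨t₂, ht₂⟩ := B.exists_forall_le_mul (fun b => -f b) g hB
  set t := max 0 (max t₁ t₂)
  have ht₀ : 0 ≤ t := le_max_left _ _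
  have ht₁t : t₁ ≤ t := (le_max_left _ _).trans (le_max_right _ _)
  have ht₂t : t₂ ≤ t := (le_max_right _ _).trans (le_max_right _ _)
  refine ⟨t, fun a ha => ?_, fun b hb => ?_⟩
  · have hga := hA a ha
    have := ht₁ a ha
    constructor <;> nlinarith
  · have hgb := hB b hb
    have := ht₂ b hb
    constructor <;> nlinarith

/-- Two-ReLU fitting lemma: if `A, B ⊆ ℝ^d` are finite with `|B| = d+1`, every point of `A` has
strictly smaller `d`-th (last) coordinate than every point of `B`, and `A ∪ B` is in general
affine position, then for any labels `y` on `B` there exist `w₁, w₂ ∈ ℝ^{d+1}` which are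
nonpositive on (homogenized) `A` and nonnegative on `B`, such that
`f(x) = φ(w₁ᵀx̄) − φ(w₂ᵀx̄)` vanishes on `A` and matches the labels on `B`. -/
theorem stmt11 {d : ℕ} (hd : 0 < d) (A B : Finset (Fin d → ℝ))
    (hB : B.card = d + 1)
    (hsep : ∀ a ∈ A, ∀ b ∈ B, a ⟨d - 1, by omega⟩ < b ⟨d - 1, by omega⟩)
    (hgen : ∀ s : Finset (Fin d → ℝ), ↑s ⊆ (↑A ∪ ↑B : Set (Fin d → ℝ)) → s.card ≤ d + 1 →
      AffineIndependent ℝ ((↑) : s → (Fin d → ℝ)))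
    (y : (Fin d → ℝ) → ℝ) :
    ∃ w₁ w₂ : Fin (d + 1) → ℝ,
      (∀ a ∈ A, (∑ j, w₁ j * bar a j) ≤ 0 ∧ (∑ j, w₂ j * bar a j) ≤ 0) ∧
      (∀ b ∈ B, 0 ≤ (∑ j, w₁ j * bar b j) ∧ 0 ≤ (∑ j, w₂ j * bar b j)) ∧
      (∀ a ∈ A, max (∑ j, w₁ j * bar a j) 0 - max (∑ j, w₂ j * bar a j) 0 = 0) ∧
      (∀ b ∈ B, max (∑ j, w₁ j * bar b j) 0 - max (∑ j, w₂ j * bar b j) 0 = y b) := by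
  set i : Fin d := ⟨d - 1, by omega⟩
  obtain ⟨w, hw⟩ := (hgen B Set.subset_union_right hB.le).linearIndependent_bar.exists_dotProduct_eq
    fun b => y b
  obtain ⟨c, hcA, hcB⟩ := (A.image (· i)).exists_between' (B.image (· i)) (by simpa using hsep)
  set v : Fin (d + 1) → ℝ := Fin.snoc (Pi.single i 1) (-c)
  have hv : ∀ x, v ⬝ᵥ bar x = x i - c := fun x => by
    rw [snoc_dotProduct_bar, single_one_dotProduct, sub_eq_add_neg]
  obtain ⟨t, htA, htB⟩ := exists_nonneg_add_mul_nonpos_nonneg A B (fun x => w ⬝ᵥ bar x)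
    (fun x => v ⬝ᵥ bar x) (fun a ha => by simpa [hv] using hcA _ (mem_image_of_mem _ ha))
    (fun b hb => by simpa [hv] using hcB _ (mem_image_of_mem _ hb))
  have hsign : (∀ a ∈ A, (w + t • v) ⬝ᵥ bar a ≤ 0 ∧ (t • v) ⬝ᵥ bar a ≤ 0) ∧
      ∀ b ∈ B, 0 ≤ (w + t • v) ⬝ᵥ bar b ∧ 0 ≤ (t • v) ⬝ᵥ bar b := by
    simpa only [add_dotProduct, smul_dotProduct, smul_eq_mul] using And.intro htA htB
  refine ⟨w + t • v, t • v, hsign.1, hsign.2, fun a ha => ?_, fun b hb => ?_⟩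
  · obtain ⟨h₁, h₂⟩ := hsign.1 a ha
    simp only [← dotProduct.eq_1]
    rw [max_eq_right h₁, max_eq_right h₂, sub_self]
  · obtain ⟨h₁, h₂⟩ := hsign.2 b hb
    simp only [← dotProduct.eq_1]
    rw [max_eq_left h₁, max_eq_left h₂, add_dotProduct, add_sub_cancel_right]
    exact hw ⟨b, hb⟩
end

section
/- Any shallow ReLU network with m hidden units and fixed output weights, f(x) = Σ_{j=1}^m v_j max(w_jᵀx̄, 0) + c, that exactly fits N arbitrary generic labels on N points in ℝ^d must satisfy m ≥ N/(d+1) in the sense of degrees of freedom: if m < N/(d+1), then for generic label vectors y ∈ ℝ^N there is no choice of parameters (w_1,...,w_m, c) fitting all N labels. Equivalently: the image of the parameter space ℝ^{m(d+1)+1} under the map (W,c) ↦ (f(x_1),...,f(x_N)) is contained in a finite union of affine subspaces of ℝ^N of dimension at most m(d+1)+1 < N, hence has Lebesgue measure zero in ℝ^N. -/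
/-- Affine (linear) map for a fixed activation pattern. -/
def patMap {d N m : ℕ} (x : Fin N → Fin d → ℝ) (v : Fin m → ℝ)
    (A : Fin N → Fin m → Bool) :
    ((Fin m → Fin (d + 1) → ℝ) × ℝ) →ₗ[ℝ] (Fin N → ℝ) where
  toFun Wc := fun i =>
    (∑ j, v j * (if A i j then ∑ l, Wc.1 j l * bar (x i) l else 0)) + Wc.2
  map_add' Wc Wc' := by
    funext i
    have h : ∀ j, (if A i j then ∑ l, (Wc.1 j l + Wc'.1 j l) * bar (x i) l else 0)
        = (if A i j then ∑ l, Wc.1 j l * bar (x i) l else 0)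
          + (if A i j then ∑ l, Wc'.1 j l * bar (x i) l else 0) := by
      intro j; split <;> simp [add_mul, Finset.sum_add_distrib]
    simp only [Prod.fst_add, Prod.snd_add, Pi.add_apply, h, mul_add,
      Finset.sum_add_distrib]
    ring
  map_smul' a Wc := by
    funext i
    have h : ∀ j, (if A i j then ∑ l, (a * Wc.1 j l) * bar (x i) l else 0)
        = a * (if A i j then ∑ l, Wc.1 j l * bar (x i) l else 0) := by
      intro j; split <;> simp [Finset.mul_sum, mul_assoc]
    simp only [Prod.smul_fst, Prod.smul_snd, Pi.smul_apply, smul_eq_mul, h,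
      RingHom.id_apply]
    rw [mul_add, Finset.mul_sum]
    congr 1
    exact Finset.sum_congr rfl fun j _ => by ring

/-- Degrees-of-freedom lower bound: for a shallow ReLU network with `m` hidden units, fixed
output weights `v`, trainable first layer `W` and output bias `c`, if `m(d+1) + 1 < N` then the
image of parameter space under the map to output vectors on `N` fixed points is contained in a
finite union of affine subspaces of `ℝ^N` of dimension at most `m(d+1)+1`, hence has Lebesgue
measure zero in `ℝ^N`. -/
theorem stmt13 {d N m : ℕ} (hm : m * (d + 1) + 1 < N)
    (x : Fin N → Fin d → ℝ) (v : Fin m → ℝ) :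
    ∃ (k : ℕ) (Ss : Fin k → AffineSubspace ℝ (Fin N → ℝ)),
      (Set.range (fun Wc : (Fin m → Fin (d + 1) → ℝ) × ℝ => fun i =>
          (∑ j, v j * max (∑ l, Wc.1 j l * bar (x i) l) 0) + Wc.2)
        ⊆ ⋃ jj, (Ss jj : Set (Fin N → ℝ))) ∧
      (∀ jj, Module.finrank ℝ (Ss jj).direction ≤ m * (d + 1) + 1) ∧
      MeasureTheory.volume (Set.range (fun Wc : (Fin m → Fin (d + 1) → ℝ) × ℝ => fun i =>
          (∑ j, v j * max (∑ l, Wc.1 j l * bar (x i) l) 0) + Wc.2)) = 0 := by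
  classical
  set k := Fintype.card (Fin N → Fin m → Bool) with hk
  let e := (Fintype.equivFin (Fin N → Fin m → Bool)).symm
  let S : (Fin N → Fin m → Bool) → AffineSubspace ℝ (Fin N → ℝ) :=
    fun A => (LinearMap.range (patMap x v A)).toAffineSubspace
  refine ⟨k, fun jj => S (e jj), ?_, ?_, ?_⟩
  · rintro _ ⟨Wc, rfl⟩
    set A : Fin N → Fin m → Bool := fun i j =>
      decide (0 ≤ ∑ l, Wc.1 j l * bar (x i) l) with hA
    refine Set.mem_iUnion.2 ⟨e.symm A, ?_⟩
    simp only [S, Equiv.apply_symm_apply, SetLike.mem_coe]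
    rw [Submodule.mem_toAffineSubspace, LinearMap.mem_range]
    refine ⟨Wc, ?_⟩
    funext i
    show (∑ j, v j * (if A i j then ∑ l, Wc.1 j l * bar (x i) l else 0)) + Wc.2 = _
    congr 1
    refine Finset.sum_congr rfl fun j _ => ?_
    congr 1
    rcases le_or_gt 0 (∑ l, Wc.1 j l * bar (x i) l) with h | h
    · simp [hA, h, max_eq_left h]
    · simp [hA, not_le.2 h, max_eq_right h.le]
  · intro jj
    have h1 : Module.finrank ℝ ((Fin m → Fin (d + 1) → ℝ) × ℝ) = m * (d + 1) + 1 := by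
      simp [Module.finrank_prod, Module.finrank_pi_fintype]
    have h2 := LinearMap.finrank_range_le (patMap x v (e jj))
    rw [h1] at h2
    show Module.finrank ℝ ((LinearMap.range (patMap x v (e jj))).toAffineSubspace).direction ≤ _
    exact (Submodule.toAffineSubspace_direction (LinearMap.range (patMap x v (e jj)))).symm ▸ h2
  · have hzero : ∀ jj : Fin k, MeasureTheory.volume ((S (e jj) : Set (Fin N → ℝ))) = 0 := by
      intro jj
      apply MeasureTheory.Measure.addHaar_affineSubspace
      intro htop
      have hd : (S (e jj)).direction = ⊤ := by rw [htop]; exact AffineSubspace.direction_top ℝ _ _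
      have h2 := LinearMap.finrank_range_le (patMap x v (e jj))
      have h1 : Module.finrank ℝ ((Fin m → Fin (d + 1) → ℝ) × ℝ) = m * (d + 1) + 1 := by
        simp [Module.finrank_prod, Module.finrank_pi_fintype]
      rw [h1] at h2
      have h3 : Module.finrank ℝ ((LinearMap.range (patMap x v (e jj))).toAffineSubspace).direction ≤ m * (d + 1) + 1 :=
        (Submodule.toAffineSubspace_direction (LinearMap.range (patMap x v (e jj)))).symm ▸ h2
      rw [hd] at h3
      simp [finrank_top] at h3
      omega
    apply MeasureTheory.measure_mono_null _ (MeasureTheory.measure_iUnion_null hzero)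
    rintro _ ⟨Wc, rfl⟩
    set A : Fin N → Fin m → Bool := fun i j =>
      decide (0 ≤ ∑ l, Wc.1 j l * bar (x i) l) with hA
    refine Set.mem_iUnion.2 ⟨e.symm A, ?_⟩
    simp only [S, Equiv.apply_symm_apply, SetLike.mem_coe]
    rw [Submodule.mem_toAffineSubspace, LinearMap.mem_range]
    refine ⟨Wc, ?_⟩
    funext i
    show (∑ j, v j * (if A i j then ∑ l, Wc.1 j l * bar (x i) l else 0)) + Wc.2 = _
    congr 1
    refine Finset.sum_congr rfl fun j _ => ?_
    congr 1
    rcases le_or_gt 0 (∑ l, Wc.1 j l * bar (x i) l) with h | h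
    · simp [hA, h, max_eq_left h]
    · simp [hA, not_le.2 h, max_eq_right h.le]
end

section
/- Consider the dataset in ℝ² with points x_1=(1,0), x_2=(2,0), x_3=(3,0), x_4=(4,0), x_5=(5,0) and labels y=(1,2,2.5,4,5), and a single affine ReLU f_{w,b}(x)=max(wᵀx+b,0) trained with the ℓ1 loss L(w,b)=Σ_i |f_{w,b}(x_i)−y_i|. The infimum of L over (w,b) ∈ ℝ²×ℝ is strictly positive, but for every ε>0 the perturbed dataset with x_3 replaced by (3,ε) (all other points and labels unchanged) admits parameters achieving L = 0 (namely w=(1, −1/(2ε)), b=0). Hence the global minimum of the loss is discontinuous with respect to the dataset at this configuration, which is not in general position. -/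
/-- A single affine ReLU unit on `ℝ²` (output weight 1). -/
noncomputable def reluUnit (w : ℝ × ℝ) (b : ℝ) (p : ℝ × ℝ) : ℝ :=
  max (w.1 * p.1 + w.2 * p.2 + b) 0

/-- The ℓ1 training loss of a single affine ReLU on five labeled points. -/
noncomputable def l1Loss (x : Fin 5 → ℝ × ℝ) (y : Fin 5 → ℝ) (w : ℝ × ℝ) (b : ℝ) : ℝ :=
  ∑ i, |reluUnit w b (x i) - y i|

lemma loss_lb (w : ℝ × ℝ) (b : ℝ) :
    (1/4 : ℝ) ≤ l1Loss ![(1, 0), (2, 0), (3, 0), (4, 0), (5, 0)] ![1, 2, 2.5, 4, 5] w b := by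
  obtain ⟨a, c⟩ := w
  simp only [l1Loss, reluUnit, Fin.sum_univ_five, Matrix.cons_val_zero, Matrix.cons_val_one,
    Matrix.head_cons, Matrix.cons_val_two, Matrix.tail_cons, Matrix.cons_val_three,
    Matrix.cons_val_four, Matrix.head_fin_const]
  have hconv : max (a * 2 + c * 0 + b) 0 ≤
      (max (a * 1 + c * 0 + b) 0 + max (a * 3 + c * 0 + b) 0) / 2 := by
    apply max_le
    · have h1 := le_max_left (a * 1 + c * 0 + b) 0
      have h2 := le_max_left (a * 3 + c * 0 + b) 0
      linarith
    · have h1 := le_max_right (a * 1 + c * 0 + b) 0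
      have h2 := le_max_right (a * 3 + c * 0 + b) 0
      linarith
  have e0 := le_abs_self (max (a * 1 + c * 0 + b) 0 - 1)
  have e1 := neg_abs_le (max (a * 2 + c * 0 + b) 0 - 2)
  have e2 := le_abs_self (max (a * 3 + c * 0 + b) 0 - 2.5)
  have p0 := abs_nonneg (max (a * 1 + c * 0 + b) 0 - 1)
  have p2 := abs_nonneg (max (a * 3 + c * 0 + b) 0 - 2.5)
  have p3 := abs_nonneg (max (a * 4 + c * 0 + b) 0 - 4)
  have p4 := abs_nonneg (max (a * 5 + c * 0 + b) 0 - 5)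
  linarith

/-- For the dataset `x = (1,0),(2,0),(3,0),(4,0),(5,0)` with labels `(1,2,2.5,4,5)`, the
infimum of the ℓ1 loss of a single affine ReLU is strictly positive, yet for every `ε > 0` the
perturbed dataset with `x₃` replaced by `(3, ε)` admits parameters `w = (1, −1/(2ε))`, `b = 0`
achieving zero loss: the global minimum is discontinuous in the dataset. -/
theorem stmt17 :
    (0 < sInf {l : ℝ | ∃ w b, l = l1Loss ![(1, 0), (2, 0), (3, 0), (4, 0), (5, 0)]
        ![1, 2, 2.5, 4, 5] w b}) ∧
    ∀ ε > (0 : ℝ),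
      l1Loss (Function.update ![(1, 0), (2, 0), (3, 0), (4, 0), (5, 0)] 2 ((3 : ℝ), ε))
        ![1, 2, 2.5, 4, 5] (1, -1 / (2 * ε)) 0 = 0 := by
  constructor
  · have h : (1/4 : ℝ) ≤ sInf {l : ℝ | ∃ w b, l = l1Loss ![(1, 0), (2, 0), (3, 0), (4, 0), (5, 0)]
        ![1, 2, 2.5, 4, 5] w b} := by
      refine le_csInf ⟨l1Loss ![(1, 0), (2, 0), (3, 0), (4, 0), (5, 0)]
        ![1, 2, 2.5, 4, 5] (0, 0) 0, (0, 0), 0, rfl⟩ ?_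
      rintro l ⟨w, b, rfl⟩
      exact loss_lb w b
    linarith
  · intro ε hε
    have hε' : ε ≠ 0 := ne_of_gt hε
    have hupd : Function.update ![((1:ℝ), (0:ℝ)), (2, 0), (3, 0), (4, 0), (5, 0)] 2 ((3 : ℝ), ε)
        = ![(1, 0), (2, 0), (3, ε), (4, 0), (5, 0)] := by
      ext i <;> fin_cases i <;> simp [Function.update]
    rw [hupd]
    simp only [l1Loss, reluUnit, Fin.sum_univ_five, Matrix.cons_val_zero, Matrix.cons_val_one,
      Matrix.head_cons, Matrix.cons_val_two, Matrix.tail_cons, Matrix.cons_val_three,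
      Matrix.cons_val_four, Matrix.head_fin_const]
    have h3 : (1 : ℝ) * 3 + -1 / (2 * ε) * ε = 2.5 := by field_simp; ring
    rw [h3]
    norm_num
end
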